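/- arXiv:2307.10900 — 3 statements merged into one kernel-verified Lean document; each statement's English description precedes it below -/
import Mathlib

section
/- Let u : ℝ × ℝ → ℝ be a function of the variables (t,x) such that the partial derivatives ∂u/∂t, ∂u/∂x and ∂²u/∂x² exist everywhere and satisfy |∂u/∂t(t,x)| ≤ M and |∂²u/∂x²(t,x)| ≤ M for all (t,x) ∈ ℝ², for some constant M > 0. Then there exists a constant C, depending only on M, such that for all t, t' ∈ ℝ and all x ∈ ℝ, |∂u/∂x(t,x) − ∂u/∂x(t',x)| ≤ C·|t − t'|^{1/2}; that is, ∂u/∂x satisfies a Hölder condition of order 1/2 in t, uniformly with respect to x. -/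
/-!
Fix `t ≠ t'` and put `φ y = u (t, y) - u (t', y)`. The time bound gives `|φ| ≤ M |t - t'|`
and the space bound gives `|φ''| ≤ 2M`. A function that is uniformly small and has a bounded
second derivative has a small first derivative: by Taylor's formula on a step `h > 0`,
`|φ' x| h ≤ 2 sup |φ| + sup |φ''| h²`. The step `h = |t - t'| ^ (1/2)` balances both terms
and yields the constant `4M`.
-/

lemma abs_sub_le_of_hasDerivAt_of_abs_le {f f' : ℝ → ℝ} {C : ℝ}
    (hf : ∀ y, HasDerivAt f (f' y) y) (hC : ∀ y, |f' y| ≤ C) (a b : ℝ) :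
    |f b - f a| ≤ C * |b - a| :=
  convex_univ.norm_image_sub_le_of_norm_hasDerivWithin_le
    (fun y _ => (hf y).hasDerivWithinAt) (fun y _ => hC y) (Set.mem_univ a) (Set.mem_univ b)

lemma abs_taylor_remainder_le {f f' f'' : ℝ → ℝ} {K : ℝ}
    (hf : ∀ y, HasDerivAt f (f' y) y) (hf' : ∀ y, HasDerivAt f' (f'' y) y)
    (hK : ∀ y, |f'' y| ≤ K) (x h : ℝ) :
    |f (x + h) - f x - f' x * h| ≤ K * h ^ 2 := by
  have hK0 : 0 ≤ K := (abs_nonneg _).trans (hK x)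
  have hg : ∀ y ∈ Set.uIcc x (x + h),
      HasDerivWithinAt (fun z => f z - f' x * z) (f' y - f' x) (Set.uIcc x (x + h)) y :=
    fun y _ => ((hf y).sub ((hasDerivAt_id y).const_mul (f' x))).hasDerivWithinAt.congr_deriv
      (by simp)
  have hbound : ∀ y ∈ Set.uIcc x (x + h), ‖f' y - f' x‖ ≤ K * |h| := fun y hy =>
    calc |f' y - f' x| ≤ K * |y - x| := abs_sub_le_of_hasDerivAt_of_abs_le hf' hK x y
      _ ≤ K * |x + h - x| := mul_le_mul_of_nonneg_left (Set.abs_sub_left_of_mem_uIcc hy) hK0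
      _ = K * |h| := by rw [add_sub_cancel_left]
  have := (convex_uIcc x (x + h)).norm_image_sub_le_of_norm_hasDerivWithin_le hg hbound
    Set.left_mem_uIcc Set.right_mem_uIcc
  rw [Real.norm_eq_abs, Real.norm_eq_abs, add_sub_cancel_left] at this
  calc |f (x + h) - f x - f' x * h|
      = |f (x + h) - f' x * (x + h) - (f x - f' x * x)| := by ring_nf
    _ ≤ K * |h| * |h| := this
    _ = K * h ^ 2 := by rw [mul_assoc, ← sq, sq_abs]

lemma abs_deriv_mul_le_of_abs_le {φ φ' φ'' : ℝ → ℝ} {A K : ℝ}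
    (hφ : ∀ y, HasDerivAt φ (φ' y) y) (hφ' : ∀ y, HasDerivAt φ' (φ'' y) y)
    (hA : ∀ y, |φ y| ≤ A) (hK : ∀ y, |φ'' y| ≤ K) (x : ℝ) {h : ℝ} (hh : 0 ≤ h) :
    |φ' x| * h ≤ 2 * A + K * h ^ 2 := by
  have htaylor := abs_taylor_remainder_le hφ hφ' hK x h
  calc |φ' x| * h = |φ (x + h) - φ x - (φ (x + h) - φ x - φ' x * h)| := by
        rw [sub_sub_cancel, abs_mul, abs_of_nonneg hh]
    _ ≤ |φ (x + h)| + |φ x| + |φ (x + h) - φ x - φ' x * h| :=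
        (abs_sub _ _).trans (add_le_add_left (abs_sub _ _) _)
    _ ≤ 2 * A + K * h ^ 2 := by linarith [hA (x + h), hA x]

theorem stmt_0_general
    (u ut ux uxx : ℝ × ℝ → ℝ) (M : ℝ)
    (hut : ∀ t x : ℝ, HasDerivAt (fun s : ℝ => u (s, x)) (ut (t, x)) t)
    (hux : ∀ t x : ℝ, HasDerivAt (fun y : ℝ => u (t, y)) (ux (t, x)) x)
    (huxx : ∀ t x : ℝ, HasDerivAt (fun y : ℝ => ux (t, y)) (uxx (t, x)) x)
    (hbt : ∀ t x : ℝ, |ut (t, x)| ≤ M)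
    (hbxx : ∀ t x : ℝ, |uxx (t, x)| ≤ M) :
    ∃ C : ℝ, ∀ t t' x : ℝ,
      |ux (t, x) - ux (t', x)| ≤ C * |t - t'| ^ ((1 : ℝ) / 2) := by
  refine ⟨4 * M, fun t t' x => ?_⟩
  rcases eq_or_ne t t' with rfl | htt
  · simp
  set h := |t - t'| ^ ((1 : ℝ) / 2)
  have hpos : 0 < h := Real.rpow_pos_of_pos (abs_pos.2 (sub_ne_zero.2 htt)) _
  have hsq : h ^ 2 = |t - t'| := by
    rw [← Real.rpow_natCast, ← Real.rpow_mul (abs_nonneg _)]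
    norm_num
  have hsmall : ∀ y, |u (t, y) - u (t', y)| ≤ M * h ^ 2 := fun y => hsq ▸
    abs_sub_le_of_hasDerivAt_of_abs_le (fun s => hut s y) (fun s => hbt s y) t' t
  have hcurv : ∀ y, |uxx (t, y) - uxx (t', y)| ≤ 2 * M := fun y =>
    (abs_sub _ _).trans (by linarith [hbxx t y, hbxx t' y])
  have key := abs_deriv_mul_le_of_abs_le (fun y => (hux t y).sub (hux t' y))
    (fun y => (huxx t y).sub (huxx t' y)) hsmall hcurv x hpos.le
  exact le_of_mul_le_mul_right (by linarith) hpos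

/-- Lemma 1 (Hölder-1/2 continuity in time of the spatial derivative):
if `u : ℝ × ℝ → ℝ` has pointwise partial derivatives `∂u/∂t = ut`,
`∂u/∂x = ux`, `∂²u/∂x² = uxx` everywhere, with `|ut| ≤ M` and `|uxx| ≤ M`
uniformly for some `M > 0`, then `ux` is Hölder of order `1/2` in `t`,
uniformly in `x`. -/
theorem stmt_0
    (u ut ux uxx : ℝ × ℝ → ℝ) (M : ℝ) (hM : 0 < M)
    (hut : ∀ t x : ℝ, HasDerivAt (fun s : ℝ => u (s, x)) (ut (t, x)) t)
    (hux : ∀ t x : ℝ, HasDerivAt (fun y : ℝ => u (t, y)) (ux (t, x)) x)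
    (huxx : ∀ t x : ℝ, HasDerivAt (fun y : ℝ => ux (t, y)) (uxx (t, x)) x)
    (hbt : ∀ t x : ℝ, |ut (t, x)| ≤ M)
    (hbxx : ∀ t x : ℝ, |uxx (t, x)| ≤ M) :
    ∃ C : ℝ, ∀ t t' x : ℝ,
      |ux (t, x) - ux (t', x)| ≤ C * |t - t'| ^ ((1 : ℝ) / 2) :=
  stmt_0_general u ut ux uxx M hut hux huxx hbt hbxx
end

section
/- Let u : ℝ → ℝ be bounded and measurable, let χ : ℝ → ℝ be continuously differentiable with compact support, and let μ be a measure on ℝ satisfying ∫_ℝ (|s| + |eˢ − 1|) dμ(s) < ∞. For λ > 0 set φ_λ(x) = λ·χ(λx), so that φ_λ'(x) = λ²·χ'(λx). Then lim_{λ→0⁺} ∫_ℝ u(x) · ( ∫_ℝ [ φ_λ(x+s) − φ_λ(x) + (eˢ − 1)·φ_λ'(x) ] dμ(s) ) dx = 0. -/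
/-!
If `χ` is `C`-Lipschitz, the integrand `φ_λ(x+s) - φ_λ(x) + (eˢ - 1) φ_λ'(x)` is bounded by
`λ² C (|s| + |eˢ - 1|)`, and it vanishes unless `λx` or `λ(x+s)` lies in `tsupport χ`, a set of
`x` of Lebesgue measure at most `2 |tsupport χ| / λ`. By Tonelli, after absorbing the weight into
the finite measure `(|s| + |eˢ - 1|) dμ`, the pairing with `u` is `O(λ)`.
-/

open MeasureTheory Filter Set
open scoped ENNReal NNReal

section Translation

variable {G : Type*} [MeasurableSpace G] [AddGroup G] [MeasurableAdd₂ G]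
  {ν : Measure G} [ν.IsAddRightInvariant] [SFinite ν]

theorem lintegral_lintegral_indicator_add_indicator_add (ρ : Measure G) [SFinite ρ] {A : Set G}
    (hA : MeasurableSet A) :
    ∫⁻ x, ∫⁻ s, A.indicator 1 x + A.indicator 1 (x + s) ∂ρ ∂ν = 2 * ν A * ρ univ := by
  have hind : Measurable (A.indicator (1 : G → ℝ≥0∞)) := measurable_one.indicator hA
  rw [lintegral_lintegral_swap (by fun_prop)]
  simp_rw [lintegral_add_left hind, lintegral_add_right_eq_self (A.indicator (1 : G → ℝ≥0∞)),
    lintegral_indicator_one hA, lintegral_const, ← two_mul]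

theorem lintegral_lintegral_enorm_le_of_eq_zero {E : Type*} [NormedAddCommGroup E]
    {μ : Measure G} {F : G → G → E} {w : G → ℝ≥0∞} {A : Set G}
    (hw : AEMeasurable w μ) (hwμ : ∫⁻ s, w s ∂μ ≠ ∞) (hA : MeasurableSet A)
    (hFw : ∀ x s, ‖F x s‖ₑ ≤ w s) (hF0 : ∀ x s, x ∉ A → x + s ∉ A → F x s = 0) :
    ∫⁻ x, ∫⁻ s, ‖F x s‖ₑ ∂μ ∂ν ≤ 2 * ν A * ∫⁻ s, w s ∂μ := by
  have : IsFiniteMeasure (μ.withDensity w) := isFiniteMeasure_withDensity hwμ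
  have hF : ∀ x s, ‖F x s‖ₑ ≤ w s * (A.indicator 1 x + A.indicator 1 (x + s)) := by
    intro x s
    by_cases hxs : x ∈ A ∨ x + s ∈ A
    · refine (hFw x s).trans (le_mul_of_one_le_right' ?_)
      rcases hxs with hx | hxs
      · exact le_add_right (by simp [hx])
      · exact le_add_left (by simp [hxs])
    · push Not at hxs
      simp [hF0 x s hxs.1 hxs.2]
  calc ∫⁻ x, ∫⁻ s, ‖F x s‖ₑ ∂μ ∂ν
      ≤ ∫⁻ x, ∫⁻ s, w s * (A.indicator 1 x + A.indicator 1 (x + s)) ∂μ ∂ν :=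
        lintegral_mono fun x => lintegral_mono fun s => hF x s
    _ = ∫⁻ x, ∫⁻ s, A.indicator 1 x + A.indicator 1 (x + s) ∂μ.withDensity w ∂ν := by
        refine lintegral_congr fun x => (lintegral_withDensity_eq_lintegral_mul₀ hw ?_).symm
        exact (Measurable.add (by measurability) ((measurable_one.indicator hA).comp
          (measurable_const_add x))).aemeasurable
    _ = 2 * ν A * ∫⁻ s, w s ∂μ := by
        rw [lintegral_lintegral_indicator_add_indicator_add _ hA, withDensity_apply _ .univ,
          Measure.restrict_univ]

theorem abs_integral_mul_integral_le_of_eq_zero {μ : Measure G} {u : G → ℝ} {F : G → G → ℝ}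
    {w : G → ℝ} {A : Set G} {M : ℝ} (hu : ∀ x, |u x| ≤ M) (hw : Integrable w μ)
    (hA : MeasurableSet A) (hAν : ν A ≠ ∞)
    (hFw : ∀ x s, |F x s| ≤ w s) (hF0 : ∀ x s, x ∉ A → x + s ∉ A → F x s = 0) :
    |∫ x, u x * ∫ s, F x s ∂μ ∂ν| ≤ 2 * M * ν.real A * ∫ s, w s ∂μ := by
  have hM : 0 ≤ M := (abs_nonneg _).trans (hu 0)
  have hw0 : ∀ s, 0 ≤ w s := fun s => (abs_nonneg _).trans (hFw 0 s)
  have hW : 0 ≤ ∫ s, w s ∂μ := integral_nonneg hw0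
  rw [← ENNReal.ofReal_le_ofReal_iff (by positivity), ← Real.enorm_eq_ofReal_abs]
  calc ‖∫ x, u x * ∫ s, F x s ∂μ ∂ν‖ₑ
      ≤ ∫⁻ x, ‖u x * ∫ s, F x s ∂μ‖ₑ ∂ν := enorm_integral_le_lintegral_enorm _
    _ ≤ ∫⁻ x, ENNReal.ofReal M * ∫⁻ s, ‖F x s‖ₑ ∂μ ∂ν := by
        refine lintegral_mono fun x => ?_
        rw [enorm_mul, Real.enorm_eq_ofReal_abs]
        gcongr
        · exact hu x
        · exact enorm_integral_le_lintegral_enorm _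
    _ = ENNReal.ofReal M * ∫⁻ x, ∫⁻ s, ‖F x s‖ₑ ∂μ ∂ν := lintegral_const_mul' _ _ ENNReal.ofReal_ne_top
    _ ≤ ENNReal.ofReal M * (2 * ν A * ∫⁻ s, ENNReal.ofReal (w s) ∂μ) := by
        gcongr
        refine lintegral_lintegral_enorm_le_of_eq_zero hw.aemeasurable.ennreal_ofReal
          hw.lintegral_lt_top.ne hA (fun x s => ?_) hF0
        rw [Real.enorm_eq_ofReal_abs]
        exact ENNReal.ofReal_le_ofReal (hFw x s)
    _ = ENNReal.ofReal (2 * M * ν.real A * ∫ s, w s ∂μ) := by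
        rw [ENNReal.ofReal_mul (by positivity), ENNReal.ofReal_mul (by positivity),
          ENNReal.ofReal_mul (by positivity), ENNReal.ofReal_ofNat, ofReal_measureReal hAν,
          ofReal_integral_eq_lintegral_ofReal hw (ae_of_all _ hw0)]
        ring

end Translation

/-- The integrand of `B*(φ_λ)(x) = ∫ [φ_λ(x+s) - φ_λ(x) + (eˢ - 1) φ_λ'(x)] dμ(s)`,
`φ_λ = λ χ(λ ·)`. -/
noncomputable def jumpIntegrand (χ : ℝ → ℝ) (l x s : ℝ) : ℝ :=
  l * χ (l * (x + s)) - l * χ (l * x) + (Real.exp s - 1) * (l ^ 2 * deriv χ (l * x))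

section JumpIntegrand

variable {χ : ℝ → ℝ} {l : ℝ}

theorem abs_jumpIntegrand_le {C : ℝ≥0} (hχ : LipschitzWith C χ) (hl : 0 ≤ l) (x s : ℝ) :
    |jumpIntegrand χ l x s| ≤ l ^ 2 * C * (|s| + |Real.exp s - 1|) := by
  have hdiff : |χ (l * (x + s)) - χ (l * x)| ≤ C * (l * |s|) := by
    simpa [← Real.dist_eq, mul_add, abs_mul, abs_of_nonneg hl] using
      hχ.dist_le_mul (l * (x + s)) (l * x)
  have hderiv : |deriv χ (l * x)| ≤ C := by
    simpa using norm_deriv_le_of_lipschitz (x₀ := l * x) hχ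
  calc |jumpIntegrand χ l x s|
      ≤ l * |χ (l * (x + s)) - χ (l * x)| + |Real.exp s - 1| * (l ^ 2 * |deriv χ (l * x)|) := by
        rw [jumpIntegrand, ← mul_sub]
        refine (abs_add_le _ _).trans_eq ?_
        rw [abs_mul, abs_mul, abs_mul, abs_of_nonneg hl, abs_of_nonneg (sq_nonneg l)]
    _ ≤ l * (C * (l * |s|)) + |Real.exp s - 1| * (l ^ 2 * C) := by gcongr
    _ = l ^ 2 * C * (|s| + |Real.exp s - 1|) := by ring

theorem jumpIntegrand_eq_zero {x s : ℝ} (hx : l * x ∉ tsupport χ)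
    (hxs : l * (x + s) ∉ tsupport χ) : jumpIntegrand χ l x s = 0 := by
  simp [jumpIntegrand, image_eq_zero_of_notMem_tsupport hx, image_eq_zero_of_notMem_tsupport hxs,
    deriv_of_notMem_tsupport hx]

theorem abs_integral_mul_integral_jumpIntegrand_le {u : ℝ → ℝ} {M : ℝ} {C : ℝ≥0}
    {μ : Measure ℝ} (hu : ∀ x, |u x| ≤ M) (hχ : LipschitzWith C χ)
    (hχ_supp : HasCompactSupport χ) (hμ : Integrable (fun s => |s| + |Real.exp s - 1|) μ)
    (hl : 0 < l) :
    |∫ x, u x * ∫ s, jumpIntegrand χ l x s ∂μ| ≤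
      2 * M * C * volume.real (tsupport χ) * (∫ s, |s| + |Real.exp s - 1| ∂μ) * l := by
  have hvol : volume.real ((l * ·) ⁻¹' tsupport χ) = l⁻¹ * volume.real (tsupport χ) := by
    rw [measureReal_def, Real.volume_preimage_mul_left hl.ne', ENNReal.toReal_mul,
      ENNReal.toReal_ofReal (abs_nonneg _), abs_of_pos (inv_pos.2 hl), measureReal_def]
  have hfin : volume ((l * ·) ⁻¹' tsupport χ) ≠ ∞ := by
    rw [Real.volume_preimage_mul_left hl.ne']
    exact ENNReal.mul_ne_top ENNReal.ofReal_ne_top hχ_supp.isCompact.measure_lt_top.ne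
  have key := abs_integral_mul_integral_le_of_eq_zero (ν := volume) hu (hμ.const_mul (l ^ 2 * C))
    (hχ_supp.isCompact.measurableSet.preimage (measurable_const_mul l)) hfin
    (abs_jumpIntegrand_le hχ hl.le) fun x s hx hxs => jumpIntegrand_eq_zero hx hxs
  rw [hvol, integral_const_mul] at key
  refine key.trans_eq ?_
  field_simp

end JumpIntegrand

theorem stmt_5_general
    (u χ : ℝ → ℝ)
    (M : ℝ) (hu_bdd : ∀ x : ℝ, |u x| ≤ M)
    (hχ : ContDiff ℝ 1 χ) (hχ_supp : HasCompactSupport χ)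
    (μ : Measure ℝ)
    (hμ : Integrable (fun s : ℝ => |s| + |Real.exp s - 1|) μ) :
    Tendsto
      (fun l : ℝ => ∫ x : ℝ,
        u x * ∫ s : ℝ,
          (l * χ (l * (x + s)) - l * χ (l * x)
            + (Real.exp s - 1) * (l ^ 2 * deriv χ (l * x))) ∂μ)
      (nhdsWithin 0 (Set.Ioi 0)) (nhds 0) := by
  obtain ⟨C, hC⟩ := hχ.lipschitzWith_of_hasCompactSupport hχ_supp one_ne_zero
  set K := 2 * M * C * volume.real (tsupport χ) * ∫ s, |s| + |Real.exp s - 1| ∂μ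
  have hK : Tendsto (fun l : ℝ => K * l) (nhdsWithin 0 (Ioi 0)) (nhds 0) := by
    simpa using (tendsto_id.const_mul K).mono_left (nhdsWithin_le_nhds (a := (0 : ℝ)))
  refine squeeze_zero_norm' ?_ hK
  filter_upwards [self_mem_nhdsWithin] with l hl
  exact abs_integral_mul_integral_jumpIntegrand_le hu_bdd hC hχ_supp hμ hl

/-- Vanishing of the pairing of a bounded measurable `u` with the adjoint
jump operator applied to the rescaled test function `φ_λ(x) = λ·χ(λx)`:
if `χ` is `C¹` with compact support and `∫ (|s| + |eˢ - 1|) dμ(s) < ∞`, then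
`∫ u(x) · (∫ [φ_λ(x+s) - φ_λ(x) + (eˢ - 1)·φ_λ'(x)] dμ(s)) dx → 0`
as `λ → 0⁺`, where `φ_λ'(x) = λ²·χ'(λx)`. -/
theorem stmt_5
    (u χ : ℝ → ℝ)
    (hu_meas : Measurable u) (M : ℝ) (hu_bdd : ∀ x : ℝ, |u x| ≤ M)
    (hχ : ContDiff ℝ 1 χ) (hχ_supp : HasCompactSupport χ)
    (μ : Measure ℝ)
    (hμ : Integrable (fun s : ℝ => |s| + |Real.exp s - 1|) μ) :
    Tendsto
      (fun l : ℝ => ∫ x : ℝ,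
        u x * ∫ s : ℝ,
          (l * χ (l * (x + s)) - l * χ (l * x)
            + (Real.exp s - 1) * (l ^ 2 * deriv χ (l * x))) ∂μ)
      (nhdsWithin 0 (Set.Ioi 0)) (nhds 0) :=
  stmt_5_general u χ M hu_bdd hχ hχ_supp μ hμ
end

section
/- Let ν̃ be a finite measure on ℝ² such that ∫_{ℝ²} e^{α(y₁−y₂)} dν̃(y) < ∞ for every α ∈ ℝ, let σ ≠ 0, q₁ ≥ 0 and c > 0. Define f : ℝ → ℝ by f(α) = (σ²/2)·α² − ( σ²/2 + ∫_{ℝ²} (e^{y₁−y₂} − 1) dν̃(y) )·α + ∫_{ℝ²} (e^{α(y₁−y₂)} − 1) dν̃(y) − q₁ − c. Then f(0) = −q₁ − c < 0, f(α) → +∞ as α → −∞, and there exists exactly one α < 0 with f(α) = 0. -/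
open MeasureTheory Filter Set ProbabilityTheory

/-!
Up to a convex quadratic and a constant, `f` is the moment generating function of `y₁ - y₂`
under `ν`, so `f` is convex, and since the mgf is nonnegative, `f` is bounded below by a quadratic
with positive leading coefficient, hence tends to `+∞` at `-∞`. A convex function that is negative
at `0` and tends to `+∞` at `-∞` has a zero on `(-∞, 0)` by the intermediate value theorem, and
only one: if `x < y < 0` were both zeros, convexity on `[x, 0]` would force `f y < f x`.
-/

theorem ProbabilityTheory.convexOn_mgf {Ω : Type*} {m : MeasurableSpace Ω} {X : Ω → ℝ}
    {μ : Measure Ω} : ConvexOn ℝ (integrableExpSet X μ) (mgf X μ) := by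
  refine ⟨convex_integrableExpSet, fun s hs t ht a b ha hb hab => ?_⟩
  have hexp_le : ∀ ω, Real.exp ((a • s + b • t) * X ω) ≤
      a * Real.exp (s * X ω) + b * Real.exp (t * X ω) := fun ω => by
    simpa [add_mul, mul_assoc] using
      convexOn_exp.2 (mem_univ (s * X ω)) (mem_univ (t * X ω)) ha hb hab
  calc mgf X μ (a • s + b • t)
      ≤ ∫ ω, (a * Real.exp (s * X ω) + b * Real.exp (t * X ω)) ∂μ :=
        integral_mono_of_nonneg (.of_forall fun _ => (Real.exp_pos _).le)
          ((hs.const_mul a).add (ht.const_mul b)) (.of_forall hexp_le)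
    _ = a • mgf X μ s + b • mgf X μ t := by
        rw [integral_add (hs.const_mul a) (ht.const_mul b), integral_const_mul,
          integral_const_mul]
        rfl

theorem convexOn_quadratic {a : ℝ} (ha : 0 ≤ a) (b : ℝ) :
    ConvexOn ℝ univ fun x : ℝ => a * x ^ 2 + b * x :=
  ((Even.convexOn_pow even_two).smul ha).add ((LinearMap.mul ℝ ℝ b).convexOn convex_univ)

theorem tendsto_quadratic_atBot_atTop {a : ℝ} (ha : 0 < a) (b : ℝ) :
    Tendsto (fun x : ℝ => a * x ^ 2 + b * x) atBot atTop := by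
  have hlin : Tendsto (fun x : ℝ => a * x + b) atBot atBot :=
    tendsto_atBot_add_const_right _ b (tendsto_id.const_mul_atBot ha)
  refine (tendsto_id.atBot_mul_atBot₀ hlin).congr fun x => ?_
  simp only [id]
  ring

theorem ConvexOn.pos_of_lt_of_apply_eq_zero_of_apply_neg {s : Set ℝ} {f : ℝ → ℝ}
    (hf : ConvexOn ℝ s f) {x y b : ℝ} (hx : x ∈ s) (hb : b ∈ s) (hxy : x < y) (hyb : y < b)
    (hfy : f y = 0) (hfb : f b < 0) : 0 < f x :=
  hfy ▸ hf.lt_left_of_right_lt hx hb (Ioo_subset_openSegment ⟨hxy, hyb⟩) (hfy ▸ hfb)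

theorem ConvexOn.existsUnique_lt_apply_eq_zero {f : ℝ → ℝ} (hf : ConvexOn ℝ univ f) {b : ℝ}
    (hfb : f b < 0) (htop : Tendsto f atBot atTop) : ∃! x, x < b ∧ f x = 0 := by
  obtain ⟨a, hfa, hab⟩ :=
    ((htop.eventually_gt_atTop 0).and (eventually_lt_atBot b)).exists
  have hcont : ContinuousOn f (Icc a b) :=
    (interior_univ (X := ℝ) ▸ hf.continuousOn_interior).mono (subset_univ _)
  obtain ⟨x, ⟨-, hxb⟩, hfx⟩ := intermediate_value_Ioo' hab.le hcont ⟨hfb, hfa⟩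
  refine ⟨x, ⟨hxb, hfx⟩, fun y ⟨hyb, hfy⟩ => ?_⟩
  rcases lt_trichotomy y x with hyx | hyx | hxy
  · linarith [hf.pos_of_lt_of_apply_eq_zero_of_apply_neg (mem_univ y) (mem_univ b) hyx hxb hfx hfb]
  · exact hyx
  · linarith [hf.pos_of_lt_of_apply_eq_zero_of_apply_neg (mem_univ x) (mem_univ b) hxy hyb hfy hfb]

/-- Existence and uniqueness of the negative root of the characteristic
equation: with `σ ≠ 0`, `q₁ ≥ 0` and `c > 0`, one has `f 0 = -q₁ - c < 0`,
`f(α) → +∞` as `α → -∞`, and there is exactly one `α < 0` with `f α = 0`. -/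
theorem stmt_8
    (ν : Measure (ℝ × ℝ)) [IsFiniteMeasure ν]
    (hexp : ∀ α : ℝ,
      Integrable (fun y : ℝ × ℝ => Real.exp (α * (y.1 - y.2))) ν)
    (σ q₁ c : ℝ) (hσ : σ ≠ 0) (hq₁ : 0 ≤ q₁) (hc : 0 < c)
    (f : ℝ → ℝ)
    (hf : ∀ α : ℝ, f α =
      σ ^ 2 / 2 * α ^ 2
        - (σ ^ 2 / 2 + ∫ y : ℝ × ℝ, (Real.exp (y.1 - y.2) - 1) ∂ν) * α
        + (∫ y : ℝ × ℝ, (Real.exp (α * (y.1 - y.2)) - 1) ∂ν)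
        - q₁ - c) :
    f 0 = -q₁ - c ∧ f 0 < 0 ∧
      Tendsto f atBot atTop ∧
      ∃! α : ℝ, α < 0 ∧ f α = 0 := by
  set X : ℝ × ℝ → ℝ := fun y => y.1 - y.2
  set B := σ ^ 2 / 2 + ∫ y : ℝ × ℝ, (Real.exp (y.1 - y.2) - 1) ∂ν
  set K := ν.real univ + q₁ + c
  have hf_mgf : f = fun α => (σ ^ 2 / 2 * α ^ 2 + (-B) * α) + mgf X ν α + -K := by
    funext α
    rw [hf, integral_sub (hexp α) (integrable_const 1)]
    simp only [integral_const, smul_eq_mul, mul_one, mgf, X, K]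
    ring
  have hf0 : f 0 = -q₁ - c := by simp [hf]
  have hσ2 : 0 < σ ^ 2 / 2 := by positivity
  have hconv : ConvexOn ℝ univ f := by
    have hmgf : ConvexOn ℝ univ (mgf X ν) := by
      convert convexOn_mgf (X := X) (μ := ν)
      exact (eq_univ_of_forall hexp).symm
    rw [hf_mgf]
    exact ((convexOn_quadratic hσ2.le (-B)).add hmgf).add_const (-K)
  have htop : Tendsto f atBot atTop := by
    refine tendsto_atTop_mono (fun α => ?_)
      (tendsto_atTop_add_const_right _ (-K) (tendsto_quadratic_atBot_atTop hσ2 (-B)))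
    rw [hf_mgf]
    linarith [mgf_nonneg (X := X) (μ := ν) (t := α)]
  exact ⟨hf0, by linarith, htop, hconv.existsUnique_lt_apply_eq_zero (by linarith) htop⟩
end
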